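/- arXiv:1801.01489 — 7 statements merged into one kernel-verified Lean document; each statement's English description precedes it below -/
import Mathlib

section
/- Let f0(t,c) denote a version of the conditional expectation E[Y | T = t, C = c], and define CATE(c) = f0(1,c) − f0(0,c). Then, with e_orig and e_switch defined from the squared error loss, e_switch(f0) − e_orig(f0) = Var(T) · ( E[CATE(C)² · 1{T=0}]/P(T=0) + E[CATE(C)² · 1{T=1}]/P(T=1) ), where Var(T) = P(T=0)·P(T=1) is the marginal variance of the binary treatment T. -/
/-!
Condition on the treatment. On `{T = t}` the residual `Y - f0(t, C)` is orthogonal to every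
square-integrable function of `C`, so Pythagoras gives
`E[(Y - f0(s, C))²; T = t] = E[(Y - f0(t, C))²; T = t] + E[CATE(C)²; T = t]`.
After switching, `T⁽ᵃ⁾` is independent of `(Y⁽ᵇ⁾, C⁽ᵇ⁾)`, so
`e_switch = P(T = 0) E[(Y - f0(0, C))²] + P(T = 1) E[(Y - f0(1, C))²]`; splitting both
expectations over `{T = 0}` and `{T = 1}` and using Pythagoras on the mismatched halves yields
`e_switch = e_orig + P(T = 0) E[CATE²; T = 1] + P(T = 1) E[CATE²; T = 0]`.
-/

open MeasureTheory

section

variable {Ω : Type*} [MeasurableSpace Ω] {μ : Measure Ω}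

theorem integral_sub_sq_eq_add_of_integral_mul_eq_zero {X a b : Ω → ℝ}
    (hXa : MemLp (fun ω => X ω - a ω) 2 μ) (hab : MemLp (fun ω => a ω - b ω) 2 μ)
    (horth : ∫ ω, (X ω - a ω) * (a ω - b ω) ∂μ = 0) :
    ∫ ω, (X ω - b ω) ^ 2 ∂μ = ∫ ω, (X ω - a ω) ^ 2 ∂μ + ∫ ω, (a ω - b ω) ^ 2 ∂μ := by
  have hcross : Integrable (fun ω => 2 * ((X ω - a ω) * (a ω - b ω))) μ :=
    (hXa.integrable_mul hab).const_mul 2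
  calc ∫ ω, (X ω - b ω) ^ 2 ∂μ
      = ∫ ω, (X ω - a ω) ^ 2 + 2 * ((X ω - a ω) * (a ω - b ω)) + (a ω - b ω) ^ 2 ∂μ := by
        congr 1; ext ω; ring
    _ = ∫ ω, (X ω - a ω) ^ 2 ∂μ + ∫ ω, (a ω - b ω) ^ 2 ∂μ := by
        have hsum : Integrable (fun ω => (X ω - a ω) ^ 2 + 2 * ((X ω - a ω) * (a ω - b ω))) μ :=
          hXa.integrable_sq.add hcross
        rw [integral_add hsum hab.integrable_sq, integral_add hXa.integrable_sq hcross,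
          integral_const_mul, horth, mul_zero, add_zero]

theorem integral_mul_ite_eq_setIntegral {p : Ω → Prop} [DecidablePred p]
    (hp : MeasurableSet {ω | p ω}) (f : Ω → ℝ) :
    ∫ ω, f ω * (if p ω then 1 else 0) ∂μ = ∫ ω in {ω | p ω}, f ω ∂μ := by
  rw [← integral_indicator hp]
  congr 1; ext ω
  by_cases h : p ω <;> simp [h]

theorem setIntegral_sub_sq_eq_add_of_integral_mul_ite_eq_zero {p : Ω → Prop} [DecidablePred p]
    (hp : MeasurableSet {ω | p ω}) {X a b : Ω → ℝ}
    (hXa : MemLp (fun ω => X ω - a ω) 2 μ) (hab : MemLp (fun ω => a ω - b ω) 2 μ)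
    (horth : ∫ ω, (X ω - a ω) * (if p ω then 1 else 0) * (a ω - b ω) ∂μ = 0) :
    ∫ ω in {ω | p ω}, (X ω - b ω) ^ 2 ∂μ
      = ∫ ω in {ω | p ω}, (X ω - a ω) ^ 2 ∂μ + ∫ ω in {ω | p ω}, (a ω - b ω) ^ 2 ∂μ := by
  simp_rw [mul_right_comm _ (ite _ _ _)] at horth
  rw [integral_mul_ite_eq_setIntegral hp] at horth
  exact integral_sub_sq_eq_add_of_integral_mul_eq_zero (hXa.restrict _) (hab.restrict _) horth

variable {T : Ω → ℝ}

omit [MeasurableSpace Ω] in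
theorem compl_setOf_eq_zero_of_binary (hT : ∀ ω, T ω = 0 ∨ T ω = 1) :
    {ω | T ω = 0}ᶜ = {ω | T ω = 1} := by
  ext ω; rcases hT ω with h | h <;> simp [h]

theorem integral_comp_of_binary (hTm : Measurable T) (hT : ∀ ω, T ω = 0 ∨ T ω = 1)
    {F : ℝ → Ω → ℝ} (hF0 : Integrable (F 0) μ) (hF1 : Integrable (F 1) μ) :
    ∫ ω, F (T ω) ω ∂μ = ∫ ω in {ω | T ω = 0}, F 0 ω ∂μ + ∫ ω in {ω | T ω = 1}, F 1 ω ∂μ := by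
  have hs0 : MeasurableSet {ω | T ω = 0} := hTm (measurableSet_singleton 0)
  have hs1 : MeasurableSet {ω | T ω = 1} := hTm (measurableSet_singleton 1)
  have hsplit : (fun ω => F (T ω) ω)
      = fun ω => {ω | T ω = 0}.indicator (F 0) ω + {ω | T ω = 1}.indicator (F 1) ω := by
    ext ω; rcases hT ω with h | h <;> simp [h]
  rw [hsplit, integral_add (hF0.indicator hs0) (hF1.indicator hs1),
    integral_indicator hs0, integral_indicator hs1]

theorem integral_prod_comp_of_binary [IsFiniteMeasure μ] {Ω' : Type*} [MeasurableSpace Ω']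
    {ν : Measure Ω'} [SFinite ν] (hTm : Measurable T) (hT : ∀ ω, T ω = 0 ∨ T ω = 1)
    {F : ℝ → Ω' → ℝ} (hF0 : Integrable (F 0) ν) (hF1 : Integrable (F 1) ν) :
    ∫ q, F (T q.1) q.2 ∂(μ.prod ν)
      = μ.real {ω | T ω = 0} * ∫ y, F 0 y ∂ν + μ.real {ω | T ω = 1} * ∫ y, F 1 y ∂ν := by
  have hs0 : MeasurableSet {ω | T ω = 0} := hTm (measurableSet_singleton 0)
  have hs1 : MeasurableSet {ω | T ω = 1} := hTm (measurableSet_singleton 1)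
  have hsplit : (fun q : Ω × Ω' => F (T q.1) q.2) = fun q =>
      {ω | T ω = 0}.indicator 1 q.1 * F 0 q.2 + {ω | T ω = 1}.indicator 1 q.1 * F 1 q.2 := by
    ext q; rcases hT q.1 with h | h <;> simp [h]
  have h0 : Integrable ({ω | T ω = 0}.indicator (1 : Ω → ℝ)) μ := (integrable_const 1).indicator hs0
  have h1 : Integrable ({ω | T ω = 1}.indicator (1 : Ω → ℝ)) μ := (integrable_const 1).indicator hs1
  rw [hsplit, integral_add (h0.mul_prod hF0) (h1.mul_prod hF1),
    integral_prod_mul, integral_prod_mul, integral_indicator_one hs0, integral_indicator_one hs1]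

end

/-- Theorem 1: connection between model reliance of the conditional expectation
function `f0` on a binary treatment `T` and the conditional average treatment
effect `CATE(c) = f0(1,c) − f0(0,c)`:
`e_switch(f0) − e_orig(f0) = Var(T)·(E[CATE(C)²1{T=0}]/P(T=0) + E[CATE(C)²1{T=1}]/P(T=1))`,
where `Var(T) = P(T=0)·P(T=1)`. -/
theorem stmt_0 {Ω 𝒞 : Type*} [MeasurableSpace Ω] [MeasurableSpace 𝒞]
    (μ : Measure Ω) [IsProbabilityMeasure μ]
    (Y T : Ω → ℝ) (C : Ω → 𝒞)
    (hYm : Measurable Y) (hTm : Measurable T) (hCm : Measurable C)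
    (hT01 : ∀ ω, T ω = 0 ∨ T ω = 1)
    (hT0 : 0 < μ {ω | T ω = 0}) (hT1 : 0 < μ {ω | T ω = 1})
    (f0 : ℝ → 𝒞 → ℝ)
    (hf0m : Measurable fun q : ℝ × 𝒞 => f0 q.1 q.2)
    (hY2 : Integrable (fun ω => (Y ω) ^ 2) μ)
    (hf02 : ∀ t ∈ ({0, 1} : Set ℝ), Integrable (fun ω => (f0 t (C ω)) ^ 2) μ)
    -- `f0(t, ·)` is a version of `E[Y ∣ T = t, C = ·]`:
    (hortho : ∀ t ∈ ({0, 1} : Set ℝ), ∀ g : 𝒞 → ℝ, Measurable g →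
      Integrable (fun ω => (g (C ω)) ^ 2) μ →
      ∫ ω, (Y ω - f0 t (C ω)) * (if T ω = t then 1 else 0) * g (C ω) ∂μ = 0) :
    (∫ q : Ω × Ω, (Y q.2 - f0 (T q.1) (C q.2)) ^ 2 ∂(μ.prod μ))
        - (∫ ω, (Y ω - f0 (T ω) (C ω)) ^ 2 ∂μ)
      = ((μ {ω | T ω = 0}).toReal * (μ {ω | T ω = 1}).toReal) *
        ((∫ ω, (f0 1 (C ω) - f0 0 (C ω)) ^ 2 * (if T ω = 0 then 1 else 0) ∂μ) /
            (μ {ω | T ω = 0}).toReal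
          + (∫ ω, (f0 1 (C ω) - f0 0 (C ω)) ^ 2 * (if T ω = 1 then 1 else 0) ∂μ) /
            (μ {ω | T ω = 1}).toReal) := by
  have h0 : (0 : ℝ) ∈ ({0, 1} : Set ℝ) := by simp
  have h1 : (1 : ℝ) ∈ ({0, 1} : Set ℝ) := by simp
  have hsT : ∀ t, MeasurableSet {ω | T ω = t} := fun t => hTm (measurableSet_singleton t)
  have hf0 : ∀ t, Measurable (f0 t) := fun t => hf0m.comp measurable_prodMk_left
  have hf : ∀ t ∈ ({0, 1} : Set ℝ), MemLp (fun ω => f0 t (C ω)) 2 μ := fun t ht =>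
    (memLp_two_iff_integrable_sq ((hf0 t).comp hCm).aestronglyMeasurable).2 (hf02 t ht)
  have hres : ∀ t ∈ ({0, 1} : Set ℝ), MemLp (fun ω => Y ω - f0 t (C ω)) 2 μ := fun t ht =>
    ((memLp_two_iff_integrable_sq hYm.aestronglyMeasurable).2 hY2).sub (hf t ht)
  have hpyth : ∀ t ∈ ({0, 1} : Set ℝ), ∀ s ∈ ({0, 1} : Set ℝ),
      ∫ ω in {ω | T ω = t}, (Y ω - f0 s (C ω)) ^ 2 ∂μ
        = ∫ ω in {ω | T ω = t}, (Y ω - f0 t (C ω)) ^ 2 ∂μ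
          + ∫ ω in {ω | T ω = t}, (f0 t (C ω) - f0 s (C ω)) ^ 2 ∂μ :=
    fun t ht s hs => setIntegral_sub_sq_eq_add_of_integral_mul_ite_eq_zero (hsT t) (hres t ht)
      ((hf t ht).sub (hf s hs))
      (hortho t ht _ ((hf0 t).sub (hf0 s)) ((hf t ht).sub (hf s hs)).integrable_sq)
  have hsplit : ∀ t ∈ ({0, 1} : Set ℝ), ∫ ω, (Y ω - f0 t (C ω)) ^ 2 ∂μ
      = ∫ ω in {ω | T ω = 0}, (Y ω - f0 t (C ω)) ^ 2 ∂μ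
        + ∫ ω in {ω | T ω = 1}, (Y ω - f0 t (C ω)) ^ 2 ∂μ := fun t ht =>
    integral_comp_of_binary hTm hT01 (F := fun _ ω => (Y ω - f0 t (C ω)) ^ 2)
      (hres t ht).integrable_sq (hres t ht).integrable_sq
  have hp : μ.real {ω | T ω = 0} + μ.real {ω | T ω = 1} = 1 := by
    rw [← compl_setOf_eq_zero_of_binary hT01, probReal_add_probReal_compl (hsT 0)]
  have hp0 : μ.real {ω | T ω = 0} ≠ 0 := (ENNReal.toReal_pos hT0.ne' (measure_ne_top μ _)).ne'
  have hp1 : μ.real {ω | T ω = 1} ≠ 0 := (ENNReal.toReal_pos hT1.ne' (measure_ne_top μ _)).ne'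
  rw [integral_prod_comp_of_binary hTm hT01 (F := fun t ω => (Y ω - f0 t (C ω)) ^ 2)
      (hres 0 h0).integrable_sq (hres 1 h1).integrable_sq,
    integral_comp_of_binary hTm hT01 (F := fun t ω => (Y ω - f0 t (C ω)) ^ 2)
      (hres 0 h0).integrable_sq (hres 1 h1).integrable_sq,
    integral_mul_ite_eq_setIntegral (hsT 0), integral_mul_ite_eq_setIntegral (hsT 1),
    hsplit 0 h0, hsplit 1 h1, hpyth 1 h1 0 h0,
    hpyth 0 h0 1 h1, ← measureReal_def, ← measureReal_def]
  simp_rw [sub_sq_comm (f0 0 _)]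
  field_simp
  linear_combination (∫ ω in {ω | T ω = 0}, (Y ω - f0 0 (C ω)) ^ 2 ∂μ
    + ∫ ω in {ω | T ω = 1}, (Y ω - f0 1 (C ω)) ^ 2 ∂μ) * hp
end

section
/- For the squared error loss and the linear model f_β(x1, x2) = x1ᵀβ1 + x2ᵀβ2, the population model reliance difference satisfies e_switch(f_β) − e_orig(f_β) = 2·Cov(Y, X1)·β1 − 2·β2ᵀ·Cov(X2, X1)·β1, where Cov(Y, X1) is the 1×p1 vector with j-th entry Cov(Y, X1[j]) and Cov(X2, X1) is the p2×p1 matrix with (k, j) entry Cov(X2[k], X1[j]). -/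
/-!
Write `A = Y - X2 ⬝ᵥ β2` and `B = X1 ⬝ᵥ β1`, so that both errors are `E[(A - B)²]`, with `A` and
`B` evaluated on independent copies in the switched one. Expanding the square, the two errors
differ only in the cross term, `E[A] E[B]` against `E[A B]`: their difference is `2 Cov(A, B)`,
and bilinearity of the covariance expands it into the coordinates of `X1` and `X2`.
-/

open MeasureTheory Matrix ProbabilityTheory
open scoped ENNReal

section SwitchedError

variable {Ω : Type*} [MeasurableSpace Ω] {μ : Measure Ω} {A B : Ω → ℝ}

lemma integral_sub_sq (hA : MemLp A 2 μ) (hB : MemLp B 2 μ) :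
    ∫ ω, (A ω - B ω) ^ 2 ∂μ
      = ∫ ω, A ω ^ 2 ∂μ - 2 * ∫ ω, A ω * B ω ∂μ + ∫ ω, B ω ^ 2 ∂μ := by
  have hAB : Integrable (fun ω => 2 * A ω * B ω) μ := by
    simpa only [Pi.mul_apply, mul_assoc] using (hA.integrable_mul hB).const_mul 2
  simp_rw [sub_sq]
  rw [integral_add (f := fun ω => A ω ^ 2 - 2 * A ω * B ω) (hA.integrable_sq.sub hAB)
      hB.integrable_sq,
    integral_sub hA.integrable_sq hAB]
  simp_rw [mul_assoc, integral_const_mul]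

variable [IsProbabilityMeasure μ]

lemma integral_prod_sub_sq (hA : MemLp A 2 μ) (hB : MemLp B 2 μ) :
    ∫ q, (A q.2 - B q.1) ^ 2 ∂μ.prod μ
      = ∫ ω, A ω ^ 2 ∂μ - 2 * ((∫ ω, A ω ∂μ) * ∫ ω, B ω ∂μ) + ∫ ω, B ω ^ 2 ∂μ := by
  rw [integral_sub_sq (hA.comp_snd μ) (hB.comp_fst μ), integral_fun_snd (fun ω => A ω ^ 2),
    integral_fun_fst (fun ω => B ω ^ 2)]
  simp_rw [mul_comm (A _) (B _), integral_prod_mul B A]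
  simp [mul_comm]

lemma integral_prod_sub_sq_sub_integral_sub_sq (hA : MemLp A 2 μ) (hB : MemLp B 2 μ) :
    ∫ q, (A q.2 - B q.1) ^ 2 ∂μ.prod μ - ∫ ω, (A ω - B ω) ^ 2 ∂μ = 2 * cov[A, B; μ] := by
  rw [integral_prod_sub_sq hA hB, integral_sub_sq hA hB, covariance_eq_sub hA hB]
  simp only [Pi.mul_apply]
  ring

end SwitchedError

section DotProduct

variable {Ω ι : Type*} [MeasurableSpace Ω] {μ : Measure Ω} [Fintype ι] {X : Ω → ι → ℝ}

lemma memLp_dotProduct {p : ℝ≥0∞} (hX : ∀ i, MemLp (fun ω => X ω i) p μ) (β : ι → ℝ) :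
    MemLp (fun ω => X ω ⬝ᵥ β) p μ :=
  memLp_finsetSum _ fun i _ => (hX i).mul_const (β i)

variable [IsFiniteMeasure μ] {Z : Ω → ℝ}

lemma covariance_dotProduct_right (hX : ∀ i, MemLp (fun ω => X ω i) 2 μ) (hZ : MemLp Z 2 μ)
    (β : ι → ℝ) :
    cov[Z, fun ω => X ω ⬝ᵥ β; μ] = ∑ i, cov[Z, fun ω => X ω i; μ] * β i := by
  simp_rw [dotProduct, covariance_fun_sum_right (fun i => (hX i).mul_const (β i)) hZ,
    covariance_mul_const_right]

lemma covariance_dotProduct_left (hX : ∀ i, MemLp (fun ω => X ω i) 2 μ) (hZ : MemLp Z 2 μ)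
    (β : ι → ℝ) :
    cov[fun ω => X ω ⬝ᵥ β, Z; μ] = ∑ i, β i * cov[fun ω => X ω i, Z; μ] := by
  rw [covariance_comm, covariance_dotProduct_right hX hZ]
  simp_rw [covariance_comm Z, mul_comm]

end DotProduct

theorem stmt_1_general {Ω : Type*} [MeasurableSpace Ω]
    (μ : Measure Ω) [IsProbabilityMeasure μ]
    {p1 p2 : ℕ}
    (Y : Ω → ℝ) (X1 : Ω → Fin p1 → ℝ) (X2 : Ω → Fin p2 → ℝ)
    (hY : Measurable Y) (hX1 : Measurable X1) (hX2 : Measurable X2)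
    (hY2 : Integrable (fun ω => (Y ω) ^ 2) μ)
    (hX12 : ∀ j, Integrable (fun ω => (X1 ω j) ^ 2) μ)
    (hX22 : ∀ k, Integrable (fun ω => (X2 ω k) ^ 2) μ)
    (β1 : Fin p1 → ℝ) (β2 : Fin p2 → ℝ) :
    (∫ q : Ω × Ω, (Y q.2 - X1 q.1 ⬝ᵥ β1 - X2 q.2 ⬝ᵥ β2) ^ 2 ∂(μ.prod μ))
        - (∫ ω, (Y ω - X1 ω ⬝ᵥ β1 - X2 ω ⬝ᵥ β2) ^ 2 ∂μ)
      = 2 * (∑ j, ((∫ ω, Y ω * X1 ω j ∂μ) - (∫ ω, Y ω ∂μ) * ∫ ω, X1 ω j ∂μ) * β1 j)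
        - 2 * (∑ k, ∑ j, β2 k *
            ((∫ ω, X2 ω k * X1 ω j ∂μ) - (∫ ω, X2 ω k ∂μ) * ∫ ω, X1 ω j ∂μ) * β1 j) := by
  have hmY : MemLp Y 2 μ := (memLp_two_iff_integrable_sq hY.aestronglyMeasurable).2 hY2
  have hm1 (j) : MemLp (fun ω => X1 ω j) 2 μ :=
    (memLp_two_iff_integrable_sq (hX1.eval (a := j)).aestronglyMeasurable).2 (hX12 j)
  have hm2 (k) : MemLp (fun ω => X2 ω k) 2 μ :=
    (memLp_two_iff_integrable_sq (hX2.eval (a := k)).aestronglyMeasurable).2 (hX22 k)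
  have hmB := memLp_dotProduct hm1 β1
  have hmC := memLp_dotProduct hm2 β2
  simp only [sub_right_comm _ (X1 _ ⬝ᵥ β1)]
  rw [integral_prod_sub_sq_sub_integral_sub_sq (A := fun ω => Y ω - X2 ω ⬝ᵥ β2) (hmY.sub hmC) hmB,
    covariance_fun_sub_left hmY hmC hmB, covariance_dotProduct_right hm1 hmY,
    covariance_dotProduct_left hm2 hmB, mul_sub]
  simp_rw [covariance_dotProduct_right hm1 (hm2 _), covariance_eq_sub hmY (hm1 _),
    covariance_eq_sub (hm2 _) (hm1 _), Pi.mul_apply, Finset.mul_sum, mul_assoc]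

/-- Theorem 2, Eq (population part): for the squared error loss and a linear
model `f_β(x1, x2) = x1ᵀβ1 + x2ᵀβ2`,
`e_switch(f_β) − e_orig(f_β) = 2·Cov(Y, X1)·β1 − 2·β2ᵀ·Cov(X2, X1)·β1`. -/
theorem stmt_1 {Ω : Type*} [MeasurableSpace Ω]
    (μ : Measure Ω) [IsProbabilityMeasure μ]
    {p1 p2 : ℕ} (hp1 : 0 < p1) (hp2 : 0 < p2)
    (Y : Ω → ℝ) (X1 : Ω → Fin p1 → ℝ) (X2 : Ω → Fin p2 → ℝ)
    (hY : Measurable Y) (hX1 : Measurable X1) (hX2 : Measurable X2)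
    (hY2 : Integrable (fun ω => (Y ω) ^ 2) μ)
    (hX12 : ∀ j, Integrable (fun ω => (X1 ω j) ^ 2) μ)
    (hX22 : ∀ k, Integrable (fun ω => (X2 ω k) ^ 2) μ)
    (β1 : Fin p1 → ℝ) (β2 : Fin p2 → ℝ) :
    (∫ q : Ω × Ω, (Y q.2 - X1 q.1 ⬝ᵥ β1 - X2 q.2 ⬝ᵥ β2) ^ 2 ∂(μ.prod μ))
        - (∫ ω, (Y ω - X1 ω ⬝ᵥ β1 - X2 ω ⬝ᵥ β2) ^ 2 ∂μ)
      = 2 * (∑ j, ((∫ ω, Y ω * X1 ω j ∂μ) - (∫ ω, Y ω ∂μ) * ∫ ω, X1 ω j ∂μ) * β1 j)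
        - 2 * (∑ k, ∑ j, β2 k *
            ((∫ ω, X2 ω k * X1 ω j ∂μ) - (∫ ω, X2 ω k ∂μ) * ∫ ω, X1 ω j ∂μ) * β1 j) :=
  stmt_1_general μ Y X1 X2 hY hX1 hX2 hY2 hX12 hX22 β1 β2
end

section
/- For any β = (β1, β2) ∈ ℝ^{p1} × ℝ^{p2}, the empirical switched loss satisfies ê_switch(f_β) = (1/n)·{ yᵀy − 2·[X1ᵀW y ; X2ᵀy]ᵀ β + βᵀ [[X1ᵀX1, X1ᵀW X2],[X2ᵀW X1, X2ᵀX2]] β }, where W = (1/(n−1))(1_n 1_nᵀ − I_n), 1_n is the n-vector of ones, and I_n is the n×n identity matrix. -/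
open Matrix

theorem aux_dot {n m : ℕ} (A : Matrix (Fin n) (Fin m) ℝ) (v : Fin n → ℝ) (w : Fin m → ℝ) :
    (Aᵀ *ᵥ v) ⬝ᵥ w = v ⬝ᵥ (A *ᵥ w) := by
  rw [Matrix.mulVec_transpose, ← Matrix.dotProduct_mulVec]

theorem aux_sum_comm {n : ℕ} (a b : Fin n → ℝ) :
    ∑ i, b i * a i = ∑ i, a i * b i :=
  Finset.sum_congr rfl fun i _ => mul_comm _ _

/-- Theorem 2, Eq (finite-sample part): closed form for the empirical switched
loss `ê_switch(f_β)` of a linear model, with `W = (1/(n−1))(1ₙ1ₙᵀ − Iₙ)`. -/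
theorem stmt_2 {n p1 p2 : ℕ} (hn : 2 ≤ n)
    (y : Fin n → ℝ) (X1 : Matrix (Fin n) (Fin p1) ℝ) (X2 : Matrix (Fin n) (Fin p2) ℝ)
    (β1 : Fin p1 → ℝ) (β2 : Fin p2 → ℝ)
    (W : Matrix (Fin n) (Fin n) ℝ)
    (hW : W = ((n : ℝ) - 1)⁻¹ • (Matrix.of (fun _ _ => (1 : ℝ)) - 1)) :
    (∑ i, ∑ j ∈ Finset.univ.erase i, (y j - X1 i ⬝ᵥ β1 - X2 j ⬝ᵥ β2) ^ 2) /
        ((n : ℝ) * ((n : ℝ) - 1))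
      = (1 / (n : ℝ)) *
        (y ⬝ᵥ y
          - 2 * ((X1ᵀ *ᵥ (W *ᵥ y)) ⬝ᵥ β1 + (X2ᵀ *ᵥ y) ⬝ᵥ β2)
          + (β1 ⬝ᵥ ((X1ᵀ * X1) *ᵥ β1)
            + β1 ⬝ᵥ ((X1ᵀ * W * X2) *ᵥ β2)
            + β2 ⬝ᵥ ((X2ᵀ * W * X1) *ᵥ β1)
            + β2 ⬝ᵥ ((X2ᵀ * X2) *ᵥ β2))) := by
  have hn2 : (2:ℝ) ≤ (n:ℝ) := by exact_mod_cast hn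
  have hn1 : ((n:ℝ) - 1) ≠ 0 := by linarith
  have hn0 : (n:ℝ) ≠ 0 := by linarith
  set a : Fin n → ℝ := X1 *ᵥ β1 with ha
  set b : Fin n → ℝ := X2 *ᵥ β2 with hb
  have hai : ∀ i, X1 i ⬝ᵥ β1 = a i := fun i => rfl
  have hbi : ∀ i, X2 i ⬝ᵥ β2 = b i := fun i => rfl
  -- action of W on a vector
  have hWv : ∀ v : Fin n → ℝ, W *ᵥ v = fun i => ((n:ℝ)-1)⁻¹ * ((∑ j, v j) - v i) := by
    intro v
    funext i
    rw [hW]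
    simp [Matrix.mulVec, dotProduct, Matrix.sub_apply, Matrix.one_apply,
      sub_mul, Finset.sum_sub_distrib, Finset.mul_sum, ite_mul,
      Finset.sum_ite_eq, mul_sub]
  have hWdot : ∀ u v : Fin n → ℝ,
      (W *ᵥ v) ⬝ᵥ u = ((n:ℝ)-1)⁻¹ * ((∑ j, v j) * (∑ i, u i) - ∑ i, v i * u i) := by
    intro u v
    rw [hWv]
    simp only [dotProduct]
    have e : ∀ i : Fin n, (((n:ℝ)-1)⁻¹ * ((∑ j, v j) - v i)) * u i
        = ((n:ℝ)-1)⁻¹ * ((∑ j, v j) * u i) - ((n:ℝ)-1)⁻¹ * (v i * u i) := by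
      intro i; ring
    simp only [e]
    rw [Finset.sum_sub_distrib, ← Finset.mul_sum, ← Finset.mul_sum, ← Finset.mul_sum,
      ← mul_sub]
  -- rewrite each matrix term
  have hT1 : (X1ᵀ *ᵥ (W *ᵥ y)) ⬝ᵥ β1
      = ((n:ℝ)-1)⁻¹ * ((∑ j, y j) * (∑ i, a i) - ∑ i, y i * a i) := by
    rw [aux_dot, ← ha, hWdot]
  have hT2 : (X2ᵀ *ᵥ y) ⬝ᵥ β2 = ∑ i, y i * b i := by
    rw [aux_dot, ← hb]; simp [dotProduct]
  have hQ1 : β1 ⬝ᵥ ((X1ᵀ * X1) *ᵥ β1) = ∑ i, a i * a i := by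
    rw [← Matrix.mulVec_mulVec, dotProduct_comm, aux_dot, ← ha]
    simp [dotProduct]
  have hQ4 : β2 ⬝ᵥ ((X2ᵀ * X2) *ᵥ β2) = ∑ i, b i * b i := by
    rw [← Matrix.mulVec_mulVec, dotProduct_comm, aux_dot, ← hb]
    simp [dotProduct]
  have hQ2 : β1 ⬝ᵥ ((X1ᵀ * W * X2) *ᵥ β2)
      = ((n:ℝ)-1)⁻¹ * ((∑ j, b j) * (∑ i, a i) - ∑ i, a i * b i) := by
    rw [Matrix.mul_assoc, ← Matrix.mulVec_mulVec, ← Matrix.mulVec_mulVec,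
      dotProduct_comm, aux_dot, ← hb, ← ha, hWdot, aux_sum_comm a b]
  have hQ3 : β2 ⬝ᵥ ((X2ᵀ * W * X1) *ᵥ β1)
      = ((n:ℝ)-1)⁻¹ * ((∑ j, a j) * (∑ i, b i) - ∑ i, a i * b i) := by
    rw [Matrix.mul_assoc, ← Matrix.mulVec_mulVec, ← Matrix.mulVec_mulVec,
      dotProduct_comm, aux_dot, ← ha, ← hb, hWdot]
  have hyy : y ⬝ᵥ y = ∑ i, y i * y i := rfl
  -- reduce the LHS double sum
  have hL : (∑ i, ∑ j ∈ Finset.univ.erase i, (y j - X1 i ⬝ᵥ β1 - X2 j ⬝ᵥ β2) ^ 2)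
      = (n:ℝ) * ((∑ i, y i * y i) - 2 * (∑ i, y i * b i) + (∑ i, b i * b i))
        + (n:ℝ) * (∑ i, a i * a i)
        - 2 * ((∑ i, y i) * (∑ i, a i)) + 2 * ((∑ i, b i) * (∑ i, a i))
        - ((∑ i, y i * y i) - 2 * (∑ i, y i * b i) + (∑ i, b i * b i)
            + (∑ i, a i * a i) - 2 * ((∑ i, y i * a i) - (∑ i, a i * b i))) := by
    simp only [hai, hbi]
    have h1 : ∀ i : Fin n, (∑ j ∈ Finset.univ.erase i, (y j - a i - b j) ^ 2)
        = (∑ j, (y j - a i - b j) ^ 2) - (y i - a i - b i) ^ 2 := by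
      intro i
      rw [Finset.sum_erase_eq_sub (Finset.mem_univ i)]
    have h2 : ∀ i : Fin n, (∑ j, (y j - a i - b j) ^ 2)
        = ((∑ j, y j * y j) - 2 * (∑ j, y j * b j) + (∑ j, b j * b j))
          + (n:ℝ) * (a i * a i)
          - 2 * ((∑ j, y j) * a i) + 2 * ((∑ j, b j) * a i) := by
      intro i
      have e : ∀ j, (y j - a i - b j) ^ 2
          = y j * y j + b j * b j + (a i * a i)
            - 2 * (y j * b j) - (2 * a i) * y j + (2 * a i) * b j := by
        intro j; ring
      simp only [e, Finset.sum_add_distrib, Finset.sum_sub_distrib, Finset.sum_const,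
        Finset.card_univ, Fintype.card_fin, nsmul_eq_mul, ← Finset.mul_sum]
      ring
    have e2 : ∀ i : Fin n, (y i - a i - b i) ^ 2
        = y i * y i + b i * b i + a i * a i
          - 2 * (y i * b i) - 2 * (y i * a i) + 2 * (a i * b i) := by
      intro i; ring
    simp only [h1, h2, e2, Finset.sum_add_distrib, Finset.sum_sub_distrib,
      Finset.sum_const, Finset.card_univ, Fintype.card_fin, nsmul_eq_mul,
      ← Finset.mul_sum]
    ring
  rw [hL, hT1, hT2, hQ1, hQ2, hQ3, hQ4, hyy]
  field_simp
  ring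
end

section
/- Let δ ∈ (0,1), ε₄ = 2B_ref·√(log(1/δ)/(2n)), and define â₋(ε₄) = min_{f ∈ R̂(ε₄)} φ(f) and â₊(ε₄) = max_{f ∈ R̂(ε₄)} φ(f). Let f* ∈ argmin_{f∈ℱ} e_orig(f) be the prediction model that uniquely attains the lowest possible expected loss. If f* satisfies Assumption 2, then P( φ(f*) ∈ [ â₋(ε₄), â₊(ε₄) ] ) ≥ 1 − δ. -/
/-! With `g = L f* - L f_ref`, which is bounded by `B_ref` and has nonpositive mean because `f*`
minimizes the expected loss, Hoeffding's inequality bounds the probability of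
`∑ᵢ g(Zᵢ) ≥ n ε₄` by `exp (-n ε₄² / (2 B_ref²)) = δ`. Off this event `ê(f*) ≤ ê(f_ref) + ε₄`,
so `f*` belongs to the empirical Rashomon set and `φ f*` lies between the extreme values of `φ`
on it. -/

open MeasureTheory ProbabilityTheory Real Set

section Hoeffding

variable {Ω ι : Type*} [MeasurableSpace Ω] [Fintype ι] {μ : Measure Ω} [IsProbabilityMeasure μ]
  {g : Ω → ℝ} {B : ℝ}

lemma measureReal_pi_sum_sub_integral_ge_le (hg : Measurable g) (hB : ∀ x, |g x| ≤ B)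
    {ε : ℝ} (hε : 0 ≤ ε) :
    (Measure.pi fun _ : ι => μ).real {ω | ε ≤ ∑ i, (g (ω i) - μ[g])}
      ≤ exp (-ε ^ 2 / (2 * Fintype.card ι * B ^ 2)) := by
  have hsub : HasSubgaussianMGF (fun x => g x - μ[g]) ((‖B - -B‖₊ / 2) ^ 2) μ :=
    hasSubgaussianMGF_of_mem_Icc hg.aemeasurable (ae_of_all _ fun x => abs_le.1 (hB x))
  have hcoord (i : ι) : HasSubgaussianMGF (fun ω : ι → Ω => g (ω i) - μ[g])
      ((‖B - -B‖₊ / 2) ^ 2) (Measure.pi fun _ => μ) :=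
    .of_map (measurable_pi_apply i).aemeasurable
      (by rwa [(measurePreserving_eval (fun _ => μ) i).map_eq])
  have h := HasSubgaussianMGF.measure_sum_ge_le_of_iIndepFun
    (iIndepFun_pi (μ := fun _ : ι => μ) (X := fun _ x => g x - μ[g]) fun _ =>
      (hg.sub measurable_const).aemeasurable)
    (s := Finset.univ) (fun i _ => hcoord i) hε
  have hparam : (((‖B - -B‖₊ / 2) ^ 2 : NNReal) : ℝ) = B ^ 2 := by
    simp only [NNReal.coe_pow, NNReal.coe_div, NNReal.coe_ofNat, coe_nnnorm, Real.norm_eq_abs,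
      div_pow, sq_abs]
    ring
  simp only [Finset.sum_const, Finset.card_univ, nsmul_eq_mul, NNReal.coe_mul,
    NNReal.coe_natCast, hparam] at h
  rwa [← mul_assoc] at h

lemma measureReal_pi_sum_ge_le_of_integral_nonpos (hg : Measurable g) (hB : ∀ x, |g x| ≤ B)
    (hmean : μ[g] ≤ 0) {ε : ℝ} (hε : 0 ≤ ε) :
    (Measure.pi fun _ : ι => μ).real {ω | ε ≤ ∑ i, g (ω i)}
      ≤ exp (-ε ^ 2 / (2 * Fintype.card ι * B ^ 2)) := by
  refine le_trans (measureReal_mono fun ω hω => ?_)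
    (measureReal_pi_sum_sub_integral_ge_le hg hB hε)
  exact le_trans hω (Finset.sum_le_sum fun i _ => le_sub_self_iff _ |>.2 hmean)

end Hoeffding

section BoundedDifference

variable {α : Type*} [MeasurableSpace α] {μ : Measure α} [IsFiniteMeasure μ] {f₁ f₂ : α → ℝ}
  {B : ℝ}

lemma integrable_iff_of_abs_sub_le (h₁ : AEStronglyMeasurable f₁ μ)
    (h₂ : AEStronglyMeasurable f₂ μ) (h : ∀ x, |f₁ x - f₂ x| ≤ B) :
    Integrable f₁ μ ↔ Integrable f₂ μ := by
  have hsub : Integrable (f₁ - f₂) μ := .of_bound (h₁.sub h₂) B (ae_of_all _ h)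
  rw [← integrable_add_iff_integrable_right hsub (g := f₂), sub_add_cancel]

lemma integral_sub_neg_of_integral_lt (h₁ : AEStronglyMeasurable f₁ μ)
    (h₂ : AEStronglyMeasurable f₂ μ) (h : ∀ x, |f₁ x - f₂ x| ≤ B)
    (hlt : ∫ x, f₁ x ∂μ < ∫ x, f₂ x ∂μ) :
    ∫ x, (f₁ x - f₂ x) ∂μ < 0 := by
  have hint₂ : Integrable f₂ μ := by
    by_contra hnot
    rw [integral_undef hnot, integral_undef (mt (integrable_iff_of_abs_sub_le h₁ h₂ h).1 hnot)]
      at hlt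
    exact lt_irrefl _ hlt
  rw [integral_sub ((integrable_iff_of_abs_sub_le h₁ h₂ h).2 hint₂) hint₂]
  linarith

end BoundedDifference

lemma exp_neg_sq_mul_sqrt_log_div {B δ : ℝ} {n : ℕ} (hB : 0 < B) (hn : 0 < n) (hδ₀ : 0 < δ)
    (hδ₁ : δ ≤ 1) :
    exp (-(n * (2 * B * √(log (1 / δ) / (2 * n)))) ^ 2 / (2 * n * B ^ 2)) = δ := by
  have hlog : 0 ≤ log (1 / δ) / (2 * n) := by
    have := log_nonneg (one_le_one_div hδ₀ hδ₁)
    positivity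
  have hn' : (0 : ℝ) < n := by exact_mod_cast hn
  rw [mul_pow, mul_pow, sq_sqrt hlog, one_div, log_inv]
  field_simp
  exact exp_log hδ₀

lemma ofReal_one_sub_le_of_measureReal_le {α : Type*} [MeasurableSpace α] {μ : Measure α}
    [IsProbabilityMeasure μ] {s t : Set α} {δ : ℝ} (hs : MeasurableSet s) (hst : sᶜ ⊆ t)
    (hδ : μ.real s ≤ δ) :
    ENNReal.ofReal (1 - δ) ≤ μ t := by
  calc ENNReal.ofReal (1 - δ) ≤ ENNReal.ofReal (1 - μ.real s) := by gcongr
    _ = μ sᶜ := by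
      rw [prob_compl_eq_one_sub hs, ENNReal.ofReal_sub _ measureReal_nonneg, ENNReal.ofReal_one,
        ofReal_measureReal]
    _ ≤ μ t := measure_mono hst

theorem stmt_8_general {𝒴 𝒳1 𝒳2 : Type*}
    [MeasurableSpace 𝒴] [MeasurableSpace 𝒳1] [MeasurableSpace 𝒳2]
    (D : Measure (𝒴 × 𝒳1 × 𝒳2)) [IsProbabilityMeasure D]
    (F : Set ((𝒳1 × 𝒳2) → 𝒴))
    (L : ((𝒳1 × 𝒳2) → 𝒴) → (𝒴 × 𝒳1 × 𝒳2) → ℝ)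
    (hLmeas : ∀ f ∈ F, Measurable (L f))
    (fref : (𝒳1 × 𝒳2) → 𝒴) (hfref : fref ∈ F)
    (n : ℕ) (hn : 2 ≤ n)
    (P : Measure (Fin n → 𝒴 × 𝒳1 × 𝒳2)) (hP : P = Measure.pi fun _ => D)
    (Bref : ℝ) (hBref : 0 < Bref)
    (δ : ℝ) (hδ : δ ∈ Set.Ioo (0 : ℝ) 1)
    (ε₄ : ℝ) (hε₄ : ε₄ = 2 * Bref * Real.sqrt (Real.log (1 / δ) / (2 * n)))
    (eorig : ((𝒳1 × 𝒳2) → 𝒴) → ℝ) (heorig : ∀ f, eorig f = ∫ z, L f z ∂D)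
    (ehatorig : ((𝒳1 × 𝒳2) → 𝒴) → (Fin n → 𝒴 × 𝒳1 × 𝒳2) → ℝ)
    (hehatorig : ∀ f ω, ehatorig f ω = (∑ i, L f (ω i)) / n)
    (Rhat : ℝ → (Fin n → 𝒴 × 𝒳1 × 𝒳2) → Set ((𝒳1 × 𝒳2) → 𝒴))
    (hRhat : ∀ e ω, Rhat e ω =
      insert fref {f ∈ F | ehatorig f ω ≤ ehatorig fref ω + e})
    (φ : ((𝒳1 × 𝒳2) → 𝒴) → ℝ)
    -- `f*` uniquely attains the lowest possible expected loss
    (fstar : (𝒳1 × 𝒳2) → 𝒴) (hfstarF : fstar ∈ F)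
    (hfstar : ∀ f ∈ F, f ≠ fstar → eorig fstar < eorig f)
    -- Assumption 2 for `f*`
    (hA2 : ∀ z, |L fstar z - L fref z| ≤ Bref)
    -- `â₋(ε₄)` and `â₊(ε₄)`, assumed to be attained
    (aminus aplus : (Fin n → 𝒴 × 𝒳1 × 𝒳2) → ℝ)
    (haminus : ∀ ω, IsLeast (φ '' Rhat ε₄ ω) (aminus ω))
    (haplus : ∀ ω, IsGreatest (φ '' Rhat ε₄ ω) (aplus ω)) :
    ENNReal.ofReal (1 - δ) ≤
      P {ω | φ fstar ∈ Set.Icc (aminus ω) (aplus ω)} := by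
  obtain ⟨hδ₀, hδ₁⟩ := hδ
  subst hP
  have hn₀ : (0 : ℝ) < n := by exact_mod_cast (by omega : 0 < n)
  have hmeas_star := hLmeas fstar hfstarF
  have hmeas_ref := hLmeas fref hfref
  have hmean : ∫ z, (L fstar z - L fref z) ∂D ≤ 0 := by
    rcases eq_or_ne fstar fref with rfl | hne
    · simp
    have hlt := hfstar fref hfref hne.symm
    rw [heorig, heorig] at hlt
    exact (integral_sub_neg_of_integral_lt hmeas_star.aestronglyMeasurable
      hmeas_ref.aestronglyMeasurable hA2 hlt).le
  have hε₄₀ : 0 ≤ ε₄ := by rw [hε₄]; positivity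
  have htail : (Measure.pi fun _ => D).real
      {ω : Fin n → _ | n * ε₄ ≤ ∑ i, (L fstar (ω i) - L fref (ω i))} ≤ δ := by
    refine (measureReal_pi_sum_ge_le_of_integral_nonpos (hmeas_star.sub hmeas_ref) hA2 hmean
      (by positivity)).trans_eq ?_
    rw [Fintype.card_fin, hε₄]
    exact exp_neg_sq_mul_sqrt_log_div hBref (by exact_mod_cast hn₀) hδ₀ hδ₁.le
  refine ofReal_one_sub_le_of_measureReal_le
    (measurableSet_le measurable_const (by fun_prop)) (fun ω hω => ?_) htail
  have hmem : fstar ∈ Rhat ε₄ ω := by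
    have hω : ¬ n * ε₄ ≤ ∑ i, (L fstar (ω i) - L fref (ω i)) := hω
    rw [not_le, Finset.sum_sub_distrib] at hω
    rw [hRhat]
    refine .inr ⟨hfstarF, ?_⟩
    rw [hehatorig, hehatorig, div_add' _ _ _ hn₀.ne', div_le_div_iff_of_pos_right hn₀]
    linarith
  exact ⟨(haminus ω).2 (mem_image_of_mem φ hmem), (haplus ω).2 (mem_image_of_mem φ hmem)⟩

/-- Proposition 3 (finite-sample CI from Rashomon sets, unique minimizer): if
`f*` uniquely minimizes the expected loss over `ℱ` and satisfies Assumption 2,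
then with probability at least `1 − δ` the descriptor value `φ(f*)` lies between
the min and max of `φ` over the empirical Rashomon set `R̂(ε₄)`, where
`ε₄ = 2B_ref√(log(1/δ)/(2n))`. -/
theorem stmt_8 {𝒴 𝒳1 𝒳2 : Type*}
    [MeasurableSpace 𝒴] [MeasurableSpace 𝒳1] [MeasurableSpace 𝒳2]
    (D : Measure (𝒴 × 𝒳1 × 𝒳2)) [IsProbabilityMeasure D]
    (F : Set ((𝒳1 × 𝒳2) → 𝒴))
    (L : ((𝒳1 × 𝒳2) → 𝒴) → (𝒴 × 𝒳1 × 𝒳2) → ℝ)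
    (hL : ∀ f z, 0 ≤ L f z)
    (hLmeas : ∀ f ∈ F, Measurable (L f))
    (fref : (𝒳1 × 𝒳2) → 𝒴) (hfref : fref ∈ F)
    (n : ℕ) (hn : 2 ≤ n)
    (P : Measure (Fin n → 𝒴 × 𝒳1 × 𝒳2)) (hP : P = Measure.pi fun _ => D)
    (Bref : ℝ) (hBref : 0 < Bref)
    (δ : ℝ) (hδ : δ ∈ Set.Ioo (0 : ℝ) 1)
    (ε₄ : ℝ) (hε₄ : ε₄ = 2 * Bref * Real.sqrt (Real.log (1 / δ) / (2 * n)))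
    (eorig : ((𝒳1 × 𝒳2) → 𝒴) → ℝ) (heorig : ∀ f, eorig f = ∫ z, L f z ∂D)
    (ehatorig : ((𝒳1 × 𝒳2) → 𝒴) → (Fin n → 𝒴 × 𝒳1 × 𝒳2) → ℝ)
    (hehatorig : ∀ f ω, ehatorig f ω = (∑ i, L f (ω i)) / n)
    (Rhat : ℝ → (Fin n → 𝒴 × 𝒳1 × 𝒳2) → Set ((𝒳1 × 𝒳2) → 𝒴))
    (hRhat : ∀ e ω, Rhat e ω =
      insert fref {f ∈ F | ehatorig f ω ≤ ehatorig fref ω + e})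
    (φ : ((𝒳1 × 𝒳2) → 𝒴) → ℝ)
    -- `f*` uniquely attains the lowest possible expected loss
    (fstar : (𝒳1 × 𝒳2) → 𝒴) (hfstarF : fstar ∈ F)
    (hfstar : ∀ f ∈ F, f ≠ fstar → eorig fstar < eorig f)
    -- Assumption 2 for `f*`
    (hA2 : ∀ z, |L fstar z - L fref z| ≤ Bref)
    -- `â₋(ε₄)` and `â₊(ε₄)`, assumed to be attained
    (aminus aplus : (Fin n → 𝒴 × 𝒳1 × 𝒳2) → ℝ)
    (haminus : ∀ ω, IsLeast (φ '' Rhat ε₄ ω) (aminus ω))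
    (haplus : ∀ ω, IsGreatest (φ '' Rhat ε₄ ω) (aplus ω)) :
    ENNReal.ofReal (1 - δ) ≤
      P {ω | φ fstar ∈ Set.Icc (aminus ω) (aplus ω)} :=
  stmt_8_general D F L hLmeas fref hfref n hn P hP Bref hBref δ hδ ε₄ hε₄ eorig heorig ehatorig
    hehatorig Rhat hRhat φ fstar hfstarF hfstar hA2 aminus aplus haminus haplus
end

section
/- Fix ε_abs > 0. If γ ∈ ℝ satisfies ĥ₋,γ(ĝ₋,γ) ≥ 0, then ĥ₋,γ(ĝ₋,γ)/ε_abs − γ ≤ MR̂(f) for every f ∈ ℱ with ê_orig(f) ≤ ε_abs, and moreover −γ ≤ MR̂(f) for every f ∈ ℱ. Additionally, if either ĥ₋,γ(ĝ₋,γ) = 0 or ê_orig(ĝ₋,γ) = ε_abs, then ĥ₋,γ(ĝ₋,γ)/ε_abs − γ = MR̂(ĝ₋,γ). -/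
/-!
Dividing `ĥ₋,γ(f) = γ·ê_orig(f) + ê_switch(f)` by `ê_orig(f)` gives `γ + MR̂(f)`. Since
`ĥ₋,γ(ĝ) ≤ ĥ₋,γ(f)` and `ĥ₋,γ(ĝ) ≥ 0`, shrinking the denominator from `ε_abs` to
`ê_orig(f) ≤ ε_abs` only increases `ĥ₋,γ(ĝ)/ε_abs`, which yields the lower bound; the
bound `-γ ≤ MR̂(f)` is the case `ĥ₋,γ(ĝ) = 0`, `ε_abs = ê_orig(f)` of the same estimate.
-/

lemma mul_add_div_sub_eq_div (γ : ℝ) {a : ℝ} (b : ℝ) (ha : a ≠ 0) :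
    (γ * a + b) / a - γ = b / a := by
  rw [add_div, mul_div_cancel_right₀ γ ha, add_sub_cancel_left]

lemma div_sub_le_div_of_le_mul_add {m ε a b γ : ℝ} (hm : 0 ≤ m) (ha : 0 < a) (haε : a ≤ ε)
    (hle : m ≤ γ * a + b) : m / ε - γ ≤ b / a :=
  calc m / ε - γ ≤ m / a - γ := by gcongr
    _ ≤ (γ * a + b) / a - γ := by gcongr
    _ = b / a := mul_add_div_sub_eq_div γ b ha.ne'

theorem stmt_10_general {F : Type*}
    (eorig eswitch : F → ℝ)
    (horig : ∀ f, 0 < eorig f)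
    (εabs : ℝ)
    (γ : ℝ) (g : F)
    (hg : ∀ f, γ * eorig g + eswitch g ≤ γ * eorig f + eswitch f)
    (hpos : 0 ≤ γ * eorig g + eswitch g) :
    (∀ f, eorig f ≤ εabs →
      (γ * eorig g + eswitch g) / εabs - γ ≤ eswitch f / eorig f) ∧
    (∀ f, -γ ≤ eswitch f / eorig f) ∧
    ((γ * eorig g + eswitch g = 0 ∨ eorig g = εabs) →
      (γ * eorig g + eswitch g) / εabs - γ = eswitch g / eorig g) := by
  refine ⟨fun f hf => div_sub_le_div_of_le_mul_add hpos (horig f) hf (hg f), fun f => ?_, ?_⟩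
  · simpa using div_sub_le_div_of_le_mul_add le_rfl (horig f) le_rfl (hpos.trans (hg f))
  · rintro (hzero | rfl)
    · rw [← mul_add_div_sub_eq_div γ (eswitch g) (horig g).ne', hzero, zero_div, zero_div]
    · exact mul_add_div_sub_eq_div γ (eswitch g) (horig g).ne'

/-- Lemma 7 (lower bound for empirical model reliance via a binary search step).
`eorig`, `eswitch` are the empirical original and switched losses on a model
class `F`; `MR̂(f) = eswitch f / eorig f`; `ĥ₋,γ(f) = γ·eorig f + eswitch f`
and `g` is a minimizer of `ĥ₋,γ` over `F`. -/
theorem stmt_10 {F : Type*} [Nonempty F]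
    (eorig eswitch : F → ℝ)
    (horig : ∀ f, 0 < eorig f) (hswitch : ∀ f, 0 ≤ eswitch f)
    (εabs : ℝ) (hεabs : 0 < εabs)
    (γ : ℝ) (g : F)
    (hg : ∀ f, γ * eorig g + eswitch g ≤ γ * eorig f + eswitch f)
    (hpos : 0 ≤ γ * eorig g + eswitch g) :
    (∀ f, eorig f ≤ εabs →
      (γ * eorig g + eswitch g) / εabs - γ ≤ eswitch f / eorig f) ∧
    (∀ f, -γ ≤ eswitch f / eorig f) ∧
    ((γ * eorig g + eswitch g = 0 ∨ eorig g = εabs) →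
      (γ * eorig g + eswitch g) / εabs - γ = eswitch g / eorig g) :=
  stmt_10_general eorig eswitch horig εabs γ g hg hpos
end

section
/- Assume the loss depends on the covariates only via the prediction function, i.e., L(f, (y, x1ᵃ, x2ᵃ)) = L(f, (y, x1ᵇ, x2ᵇ)) whenever f(x1ᵃ, x2ᵃ) = f(x1ᵇ, x2ᵇ). Suppose that for every probability distribution D on 𝒵 = 𝒴 × 𝒳₁ × 𝒳₂ under which X1 is independent of (X2, Y), there exists f_D ∈ ℱ with E_D[L(f_D, Z)] = min_{f∈ℱ} E_D[L(f, Z)] and f_D(x1ᵃ, x2) = f_D(x1ᵇ, x2) for all x1ᵃ, x1ᵇ ∈ 𝒳₁ and x2 ∈ 𝒳₂. Then any ĝ ∈ argmin_{f∈ℱ} ê_switch(f) (i.e., any minimizer of ĥ₋,γ with γ = 0) satisfies MR̂(ĝ) ≤ 1, that is, ê_switch(ĝ) ≤ ê_orig(ĝ). -/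
/-!
Let `D` be the law of `(Y_J, X1_I, X2_J)` with `I, J` independent and uniform on the sample
indices. Under `D`, `X1` is independent of `(X2, Y)`, and the `n²` index pairs split into the
`n(n-1)` off-diagonal ones and the `n` diagonal ones, so
`E_D[L f] = ((n-1) ê_switch(f) + ê_orig(f)) / n`.
The model `f_D` of the hypothesis ignores `X1`, hence `ê_switch(f_D) = ê_orig(f_D) = E_D[L f_D]`.
For a minimizer `g` of `ê_switch`,
`ê_switch(g) ≤ ê_switch(f_D) = E_D[L f_D] ≤ E_D[L g] = ((n-1) ê_switch(g) + ê_orig(g)) / n`,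
which rearranges to `ê_switch(g) ≤ ê_orig(g)`.
-/

open MeasureTheory ProbabilityTheory Finset

theorem ProbabilityTheory.indepFun_map_iff {Ω Ω' β γ : Type*} [MeasurableSpace Ω]
    [MeasurableSpace Ω'] [MeasurableSpace β] [MeasurableSpace γ] {μ : Measure Ω} {T : Ω → Ω'}
    {X : Ω' → β} {Y : Ω' → γ} (hT : Measurable T) (hX : Measurable X) (hY : Measurable Y) :
    X ⟂ᵢ[μ.map T] Y ↔ (X ∘ T) ⟂ᵢ[μ] (Y ∘ T) := by
  simp only [indepFun_iff_measure_inter_preimage_eq_mul]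
  refine forall₂_congr fun s t => imp_congr_right fun hs => imp_congr_right fun ht => ?_
  rw [Measure.map_apply hT ((hX hs).inter (hY ht)), Measure.map_apply hT (hX hs),
    Measure.map_apply hT (hY ht)]
  rfl

section EmpiricalRisk

variable {ι 𝒴 𝒳1 𝒳2 : Type*} [Fintype ι]

noncomputable def empiricalRisk (h : 𝒴 × 𝒳1 × 𝒳2 → ℝ) (y : ι → 𝒴) (x1 : ι → 𝒳1)
    (x2 : ι → 𝒳2) : ℝ :=
  (∑ i, h (y i, x1 i, x2 i)) / Fintype.card ι

noncomputable def switchedEmpiricalRisk [DecidableEq ι] (h : 𝒴 × 𝒳1 × 𝒳2 → ℝ) (y : ι → 𝒴) (x1 : ι → 𝒳1)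
    (x2 : ι → 𝒳2) : ℝ :=
  (∑ i, ∑ j ∈ univ.erase i, h (y j, x1 i, x2 j)) /
    ((Fintype.card ι : ℝ) * ((Fintype.card ι : ℝ) - 1))

theorem switchedEmpiricalRisk_eq_empiricalRisk [DecidableEq ι] (hι : 1 < Fintype.card ι)
    {h : 𝒴 × 𝒳1 × 𝒳2 → ℝ} (hh : ∀ y' a b x2', h (y', a, x2') = h (y', b, x2'))
    (y : ι → 𝒴) (x1 : ι → 𝒳1) (x2 : ι → 𝒳2) :
    switchedEmpiricalRisk h y x1 x2 = empiricalRisk h y x1 x2 := by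
  have hn : (Fintype.card ι : ℝ) - 1 ≠ 0 := sub_ne_zero.2 (by exact_mod_cast hι.ne')
  have hsum : ∑ i, ∑ j ∈ univ.erase i, h (y j, x1 i, x2 j) =
      ((Fintype.card ι : ℝ) - 1) * ∑ i, h (y i, x1 i, x2 i) := by
    rw [sum_congr rfl fun i _ => sum_congr rfl fun j _ => hh (y j) (x1 i) (x1 j) (x2 j)]
    simp only [sum_erase_eq_sub (mem_univ _), sum_sub_distrib, sum_const, card_univ,
      nsmul_eq_mul]
    ring
  rw [switchedEmpiricalRisk, empiricalRisk, hsum, mul_comm (Fintype.card ι : ℝ),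
    mul_div_mul_left _ _ hn]

end EmpiricalRisk

section SwitchedMeasure

variable {ι 𝒴 𝒳1 𝒳2 : Type*} [Fintype ι] [Nonempty ι] [MeasurableSpace ι]
  [DiscreteMeasurableSpace ι] [MeasurableSpace 𝒴] [MeasurableSpace 𝒳1] [MeasurableSpace 𝒳2]

noncomputable def switchedMeasure (y : ι → 𝒴) (x1 : ι → 𝒳1) (x2 : ι → 𝒳2) :
    Measure (𝒴 × 𝒳1 × 𝒳2) :=
  ((PMF.uniformOfFintype ι).toMeasure.prod (PMF.uniformOfFintype ι).toMeasure).map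
    fun p => (y p.2, x1 p.1, x2 p.2)

variable (y : ι → 𝒴) (x1 : ι → 𝒳1) (x2 : ι → 𝒳2)

instance : IsProbabilityMeasure (switchedMeasure y x1 x2) :=
  Measure.isProbabilityMeasure_map Measurable.of_discrete.aemeasurable

theorem indepFun_switchedMeasure :
    (fun z : 𝒴 × 𝒳1 × 𝒳2 => z.2.1) ⟂ᵢ[switchedMeasure y x1 x2] fun z => (z.1, z.2.2) :=
  (indepFun_map_iff Measurable.of_discrete (by fun_prop) (by fun_prop)).2 <|
    indepFun_prod (X := x1) (Y := fun j => (y j, x2 j)) Measurable.of_discrete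
      Measurable.of_discrete

theorem integral_switchedMeasure {h : 𝒴 × 𝒳1 × 𝒳2 → ℝ} (hh : Measurable h) :
    ∫ z, h z ∂switchedMeasure y x1 x2 =
      (∑ i, ∑ j, h (y j, x1 i, x2 j)) / (Fintype.card ι : ℝ) ^ 2 := by
  rw [switchedMeasure, integral_map Measurable.of_discrete.aemeasurable
    hh.aestronglyMeasurable, integral_prod _ .of_finite]
  simp only [PMF.integral_eq_sum, PMF.uniformOfFintype_apply, smul_eq_mul, ← mul_sum,
    ENNReal.toReal_inv, ENNReal.toReal_natCast]
  ring

theorem integral_switchedMeasure_eq_risks [DecidableEq ι] (hι : 1 < Fintype.card ι)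
    {h : 𝒴 × 𝒳1 × 𝒳2 → ℝ} (hh : Measurable h) :
    ∫ z, h z ∂switchedMeasure y x1 x2 =
      (((Fintype.card ι : ℝ) - 1) * switchedEmpiricalRisk h y x1 x2 +
        empiricalRisk h y x1 x2) / Fintype.card ι := by
  have hn : (Fintype.card ι : ℝ) - 1 ≠ 0 := sub_ne_zero.2 (by exact_mod_cast hι.ne')
  have hsplit : ∑ i, ∑ j, h (y j, x1 i, x2 j) =
      ∑ i, ∑ j ∈ univ.erase i, h (y j, x1 i, x2 j) + ∑ i, h (y i, x1 i, x2 i) := by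
    rw [← sum_add_distrib]
    exact sum_congr rfl fun i _ => (sum_erase_add _ _ (mem_univ i)).symm
  rw [integral_switchedMeasure y x1 x2 hh, hsplit, switchedEmpiricalRisk, empiricalRisk]
  field_simp

end SwitchedMeasure

theorem stmt_12_general {𝒴 𝒳1 𝒳2 : Type*}
    [MeasurableSpace 𝒴] [MeasurableSpace 𝒳1] [MeasurableSpace 𝒳2]
    (F : Set ((𝒳1 × 𝒳2) → 𝒴))
    (L : ((𝒳1 × 𝒳2) → 𝒴) → (𝒴 × 𝒳1 × 𝒳2) → ℝ)
    (hLmeas : ∀ f ∈ F, Measurable (L f))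
    (n : ℕ) (hn : 2 ≤ n)
    (y : Fin n → 𝒴) (x1 : Fin n → 𝒳1) (x2 : Fin n → 𝒳2)
    (ehatorig ehatswitch : ((𝒳1 × 𝒳2) → 𝒴) → ℝ)
    (hehatorig : ∀ f, ehatorig f = (∑ i, L f (y i, x1 i, x2 i)) / n)
    (hehatswitch : ∀ f, ehatswitch f =
      (∑ i, ∑ j ∈ Finset.univ.erase i, L f (y j, x1 i, x2 j)) /
        ((n : ℝ) * ((n : ℝ) - 1)))
    -- the loss depends on the covariates only via the prediction function
    (hdep : ∀ f ∈ F, ∀ (y' : 𝒴) (x1a x1b : 𝒳1) (x2a x2b : 𝒳2),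
      f (x1a, x2a) = f (x1b, x2b) → L f (y', x1a, x2a) = L f (y', x1b, x2b))
    -- Condition 3: under independence there is a best-in-class model ignoring X1
    (hcond : ∀ D : Measure (𝒴 × 𝒳1 × 𝒳2), IsProbabilityMeasure D →
      IndepFun (fun z : 𝒴 × 𝒳1 × 𝒳2 => z.2.1) (fun z : 𝒴 × 𝒳1 × 𝒳2 => (z.1, z.2.2)) D →
      ∃ fD ∈ F, (∀ f ∈ F, (∫ z, L fD z ∂D) ≤ ∫ z, L f z ∂D) ∧
        ∀ (x1a x1b : 𝒳1) (x2' : 𝒳2), fD (x1a, x2') = fD (x1b, x2')) :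
    ∀ g ∈ F, (∀ f ∈ F, ehatswitch g ≤ ehatswitch f) → ehatswitch g ≤ ehatorig g := by
  intro g hg hmin
  have : NeZero n := ⟨by omega⟩
  have hcard : 1 < Fintype.card (Fin n) := by rw [Fintype.card_fin]; omega
  have hsw : ∀ f, ehatswitch f = switchedEmpiricalRisk (L f) y x1 x2 := fun f => by
    rw [hehatswitch, switchedEmpiricalRisk, Fintype.card_fin]
  have hor : ∀ f, ehatorig f = empiricalRisk (L f) y x1 x2 := fun f => by
    rw [hehatorig, empiricalRisk, Fintype.card_fin]
  obtain ⟨fD, hfD, hfD_min, hfD_ignores⟩ :=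
    hcond _ inferInstance (indepFun_switchedMeasure y x1 x2)
  have hfD_risks : ehatswitch fD = ehatorig fD := by
    rw [hsw, hor]
    exact switchedEmpiricalRisk_eq_empiricalRisk hcard
      (fun y' a b x2' => hdep fD hfD y' a b x2' x2' (hfD_ignores a b x2')) y x1 x2
  have hrisk := hfD_min g hg
  rw [integral_switchedMeasure_eq_risks y x1 x2 hcard (hLmeas fD hfD),
    integral_switchedMeasure_eq_risks y x1 x2 hcard (hLmeas g hg), ← hsw, ← hsw, ← hor,
    ← hor, ← hfD_risks, Fintype.card_fin,
    div_le_div_iff_of_pos_right (by positivity)] at hrisk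
  have hnR : (2 : ℝ) ≤ n := by exact_mod_cast hn
  nlinarith [hmin fD hfD]

/-- Proposition 2 (convexity for the MR lower-bound binary search): if the loss
depends on the covariates only through the prediction, and whenever `X1` is
independent of `(X2, Y)` there is a best-in-class model that ignores `X1`,
then any minimizer `g` of `ê_switch` (i.e. of `ĥ₋,γ` with `γ = 0`) satisfies
`MR̂(g) ≤ 1`, that is, `ê_switch(g) ≤ ê_orig(g)`. -/
theorem stmt_12 {𝒴 𝒳1 𝒳2 : Type*}
    [MeasurableSpace 𝒴] [MeasurableSpace 𝒳1] [MeasurableSpace 𝒳2]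
    (F : Set ((𝒳1 × 𝒳2) → 𝒴))
    (L : ((𝒳1 × 𝒳2) → 𝒴) → (𝒴 × 𝒳1 × 𝒳2) → ℝ)
    (hL : ∀ f z, 0 ≤ L f z)
    (hLmeas : ∀ f ∈ F, Measurable (L f))
    (n : ℕ) (hn : 2 ≤ n)
    (y : Fin n → 𝒴) (x1 : Fin n → 𝒳1) (x2 : Fin n → 𝒳2)
    (ehatorig ehatswitch : ((𝒳1 × 𝒳2) → 𝒴) → ℝ)
    (hehatorig : ∀ f, ehatorig f = (∑ i, L f (y i, x1 i, x2 i)) / n)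
    (hehatswitch : ∀ f, ehatswitch f =
      (∑ i, ∑ j ∈ Finset.univ.erase i, L f (y j, x1 i, x2 j)) /
        ((n : ℝ) * ((n : ℝ) - 1)))
    (hpos : ∀ f ∈ F, 0 < ehatorig f)
    -- the loss depends on the covariates only via the prediction function
    (hdep : ∀ f ∈ F, ∀ (y' : 𝒴) (x1a x1b : 𝒳1) (x2a x2b : 𝒳2),
      f (x1a, x2a) = f (x1b, x2b) → L f (y', x1a, x2a) = L f (y', x1b, x2b))
    -- Condition 3: under independence there is a best-in-class model ignoring X1
    (hcond : ∀ D : Measure (𝒴 × 𝒳1 × 𝒳2), IsProbabilityMeasure D →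
      IndepFun (fun z : 𝒴 × 𝒳1 × 𝒳2 => z.2.1) (fun z : 𝒴 × 𝒳1 × 𝒳2 => (z.1, z.2.2)) D →
      ∃ fD ∈ F, (∀ f ∈ F, (∫ z, L fD z ∂D) ≤ ∫ z, L f z ∂D) ∧
        ∀ (x1a x1b : 𝒳1) (x2' : 𝒳2), fD (x1a, x2') = fD (x1b, x2')) :
    ∀ g ∈ F, (∀ f ∈ F, ehatswitch g ≤ ehatswitch f) → ehatswitch g ≤ ehatorig g :=
  stmt_12_general F L hLmeas n hn y x1 x2 ehatorig ehatswitch hehatorig hehatswitch hdep hcond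
end

section
/- Fix ε_abs > 0. If γ < 0 and ĥ₊,γ(ĝ₊,γ) ≥ 0, then MR̂(f) ≤ ( ĥ₊,γ(ĝ₊,γ)/ε_abs − 1 )·γ⁻¹ for every f ∈ ℱ with ê_orig(f) ≤ ε_abs, and moreover MR̂(f) ≤ |γ⁻¹| for every f ∈ ℱ. Additionally, if either ĥ₊,γ(ĝ₊,γ) = 0 or ê_orig(ĝ₊,γ) = ε_abs, then MR̂(ĝ₊,γ) = ( ĥ₊,γ(ĝ₊,γ)/ε_abs − 1 )·γ⁻¹. -/
/-- Lemma 9 (upper bound for empirical model reliance via a binary search step).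
`ĥ₊,γ(f) = eorig f + γ·eswitch f` and `g` is a minimizer of `ĥ₊,γ` over `F`. -/
theorem stmt_13 {F : Type*} [Nonempty F]
    (eorig eswitch : F → ℝ)
    (horig : ∀ f, 0 < eorig f) (hswitch : ∀ f, 0 ≤ eswitch f)
    (εabs : ℝ) (hεabs : 0 < εabs)
    (γ : ℝ) (hγ : γ < 0) (g : F)
    (hg : ∀ f, eorig g + γ * eswitch g ≤ eorig f + γ * eswitch f)
    (hpos : 0 ≤ eorig g + γ * eswitch g) :
    (∀ f, eorig f ≤ εabs →
      eswitch f / eorig f ≤ ((eorig g + γ * eswitch g) / εabs - 1) * γ⁻¹) ∧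
    (∀ f, eswitch f / eorig f ≤ |γ⁻¹|) ∧
    ((eorig g + γ * eswitch g = 0 ∨ eorig g = εabs) →
      eswitch g / eorig g = ((eorig g + γ * eswitch g) / εabs - 1) * γ⁻¹) := by
  have hγne : γ ≠ 0 := ne_of_lt hγ
  have hεne : εabs ≠ 0 := ne_of_gt hεabs
  refine ⟨?_, ?_, ?_⟩
  · intro f hf
    have hof := horig f
    have hgf := hg f
    rw [div_le_iff₀ hof, ← sub_nonneg]
    have key : ((eorig g + γ * eswitch g) / εabs - 1) * γ⁻¹ * eorig f - eswitch f
        = ((eorig g + γ * eswitch g) * eorig f - εabs * eorig f - εabs * γ * eswitch f)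
          / (εabs * γ) := by
      field_simp
    rw [key]
    apply div_nonneg_of_nonpos
    · nlinarith [mul_nonneg hpos (sub_nonneg.2 hf), mul_nonneg (mul_nonneg hεabs.le (neg_nonneg.2 hγ.le)) (hswitch f)]
    · nlinarith
  · intro f
    have hof := horig f
    have hgf := hg f
    rw [abs_of_nonpos (inv_nonpos.2 hγ.le), div_le_iff₀ hof]
    have h0 : 0 ≤ eorig f + γ * eswitch f := le_trans hpos hgf
    nlinarith [mul_inv_cancel₀ hγne, hswitch f]
  · intro h
    have hog := horig g
    rcases h with h | h
    · have hsg : eswitch g = -(eorig g / γ) := by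
        field_simp
        linarith [h]
      rw [h, hsg]
      field_simp
      ring
    · rw [← h]
      field_simp
      ring
end
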